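/- Let m be an even positive integer, let d = 2^s for some integer s ≥ 1, and let n > m·d. Consider any deterministic sequential protocol for n parties that solves the sequential n-point modulo-(m,d) problem with certainty. Then there exist indices a and L with L ≥ (n − m·d)/(m·d) such that for every k with a ≤ k < a + L (and 1 ≤ k ≤ n−1), the message alphabet satisfies m·|M_k| ≥ d; that is, the protocol contains a run of at least (n − m·d)/(m·d) consecutive stages each of which sends at least log₂(d/m) bits of communication. -/

import Mathlib

/-- A deterministic sequential protocol for `n` parties in the sequential `n`-point
modulo-`(m,d)` problem.  Stage `k+1` (1-indexed) receives a message from alphabet `Msg k`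
(`Msg 0` being a one-element set), together with its input in `Fin d`, produces an output
in `Fin m` and sends a message from alphabet `Msg (k+1)` to the following party. -/
structure SeqProtocol (n m d : ℕ) where
  Msg : ℕ → Type
  msgFintype : ∀ k, Fintype (Msg k)
  msgInit : Msg 0
  msgInitSubsingleton : Subsingleton (Msg 0)
  out : (k : ℕ) → Fin d → Msg k → Fin m
  send : (k : ℕ) → Fin d → Msg k → Msg (k + 1)

namespace SeqProtocol

variable {n m d : ℕ}

/-- The message produced after the first `k` stages on input `X` (where `X k` is the
input of the `(k+1)`-st party, 0-indexed). -/
def run (P : SeqProtocol n m d) (X : ℕ → Fin d) : (k : ℕ) → P.Msg k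
  | 0 => P.msgInit
  | k + 1 => P.send k (X k) (P.run X k)

/-- The protocol solves the sequential `n`-point modulo-`(m,d)` problem with certainty:
for every input `X` with `∑ X k ≡ 0 (mod d)`, the outputs `Y` satisfy
`d * ∑ Y k ≡ ∑ X k (mod m·d)`. -/
def Solves (P : SeqProtocol n m d) : Prop :=
  ∀ X : ℕ → Fin d,
    (d : ℤ) ∣ (∑ k ∈ Finset.range n, ((X k : ℕ) : ℤ)) →
    ((d : ℤ) * ∑ k ∈ Finset.range n, ((P.out k (X k) (P.run X k) : ℤ))) ≡
      (∑ k ∈ Finset.range n, ((X k : ℕ) : ℤ)) [ZMOD ((m : ℤ) * d)]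

end SeqProtocol

/-!
For a stage `k` and a message `μ`, consider the residues modulo `m * d` of the partial
sums `∑_{i<k} (X_i - d Y_i)` over all inputs whose run sends `μ` at stage `k`. Completing
two such inputs by a common suffix that makes `∑ X ≡ 0 (mod d)` shows that, when `k < n`,
these residues are determined by their reductions mod `d`; so there are at most `d` of them.
If `Msg (k + 1)` has fewer than `d` elements, two inputs `x₁ ≠ x₂` at stage `k` turn the
same message into the same next one, and the largest such residue set must grow: otherwise
it would be invariant under a translation that is nonzero mod `d`, which is impossible for a
set that reduces injectively mod `d` when `m` is even and `d` is a power of two. Hence fewer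
than `d` stages have fewer than `d` messages, and one of `d` consecutive windows of length
`n / (m * d)` avoids them all.
-/

open scoped Finset

theorem Finset.exists_disjoint_Ico_of_card_lt {B : Finset ℕ} {r : ℕ} (hB : #B < r) (a w : ℕ) :
    ∃ j < r, Disjoint (Finset.Ico (a + j * w) (a + j * w + w)) B := by
  by_contra! h
  have hsub : Finset.range r ⊆ B.image fun k => (k - a) / w := by
    intro j hj
    obtain ⟨k, hkI, hkB⟩ := Finset.not_disjoint_iff.1 (h j (Finset.mem_range.1 hj))
    rw [Finset.mem_Ico] at hkI
    exact Finset.mem_image.2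
      ⟨k, hkB, Nat.div_eq_of_lt_le (by omega) (by rw [add_one_mul]; omega)⟩
  have := (Finset.card_le_card hsub).trans Finset.card_image_le
  rw [Finset.card_range] at this
  omega

namespace ZMod

variable {m d s : ℕ}

theorem exists_nsmul_ne_zero_castHom_nsmul_eq_zero (hm : Even m) (hd : d = 2 ^ s)
    {δ : ZMod (m * d)} (hδ : ZMod.castHom (dvd_mul_left d m) (ZMod d) δ ≠ 0) :
    ∃ k : ℕ, ZMod.castHom (dvd_mul_left d m) (ZMod d) (k • δ) = 0 ∧ k • δ ≠ 0 := by
  subst hd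
  set π := ZMod.castHom (dvd_mul_left (2 ^ s) m) (ZMod (2 ^ s))
  set L := addOrderOf (π δ)
  obtain ⟨j, -, hLj⟩ := (Nat.dvd_prime_pow Nat.prime_two).1
    (ZMod.card (2 ^ s) ▸ addOrderOf_dvd_card (x := π δ))
  obtain ⟨i, rfl⟩ : ∃ i, j = i + 1 :=
    Nat.exists_eq_add_one.2 (Nat.pos_of_ne_zero fun hj => hδ <|
      AddMonoid.addOrderOf_eq_one_iff.1 (by rw [hLj, hj, pow_zero]))
  refine ⟨L, by rw [map_nsmul]; exact addOrderOf_nsmul_eq_zero _, fun hLδ => ?_⟩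
  obtain ⟨m', rfl⟩ := hm
  set v : ℤ := δ.cast
  have hv : ((v : ℤ) : ZMod ((m' + m') * 2 ^ s)) = δ :=
    (ZMod.intCast_cast δ).trans (ZMod.cast_id _ _)
  -- `L • δ = 0` reads `2 m' 2^s ∣ 2^(i+1) v`, which already gives `2^s ∣ 2^i v`
  have h1 : (((m' + m') * 2 ^ s : ℕ) : ℤ) ∣ 2 ^ (i + 1) * v := by
    have hL : (2 ^ (i + 1) : ℕ) • δ = 0 := hLj ▸ hLδ
    rw [← ZMod.intCast_zmod_eq_zero_iff_dvd]
    push_cast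
    rw [hv, ← hL, nsmul_eq_mul]
    push_cast
    rfl
  have h2 : (2 ^ i) • π δ = 0 := by
    have h : ((2 ^ s : ℕ) : ℤ) ∣ 2 ^ i * v := by
      refine Dvd.dvd.trans (dvd_mul_left _ (m' : ℤ)) (Int.dvd_of_mul_dvd_mul_left two_ne_zero ?_)
      convert h1 using 1 <;> push_cast <;> ring
    rw [← hv, map_intCast, nsmul_eq_mul]
    exact_mod_cast (ZMod.intCast_zmod_eq_zero_iff_dvd _ _).2 h
  have := addOrderOf_le_of_nsmul_eq_zero (pow_pos two_pos i) h2
  rw [hLj] at this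
  exact absurd this (Nat.pow_lt_pow_right one_lt_two i.lt_succ_self).not_ge

theorem castHom_eq_zero_of_add_mem (hm : Even m) (hd : d = 2 ^ s) {U : Finset (ZMod (m * d))}
    (hU : U.Nonempty) (hinj : Set.InjOn (ZMod.castHom (dvd_mul_left d m) (ZMod d)) U)
    {δ : ZMod (m * d)} (hδ : ∀ u ∈ U, u + δ ∈ U) :
    ZMod.castHom (dvd_mul_left d m) (ZMod d) δ = 0 := by
  by_contra hne
  obtain ⟨k, hπk, hk⟩ := exists_nsmul_ne_zero_castHom_nsmul_eq_zero hm hd hne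
  obtain ⟨u, hu⟩ := hU
  have horbit : ∀ j : ℕ, u + j • δ ∈ U := by
    intro j
    induction j with
    | zero => simpa using hu
    | succ j ih => rw [succ_nsmul, ← add_assoc]; exact hδ _ ih
  refine hk (add_eq_left.1 (hinj (horbit k) hu ?_))
  rw [map_add, hπk, add_zero]

end ZMod

namespace SeqProtocol

variable {n m d : ℕ} (P : SeqProtocol n m d)

instance (k : ℕ) : Fintype (P.Msg k) := P.msgFintype k

theorem run_congr {X Y : ℕ → Fin d} {k : ℕ} (h : ∀ i < k, X i = Y i) :
    P.run X k = P.run Y k := by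
  induction k with
  | zero => rfl
  | succ k ih => simp only [run, ih fun i hi => h i (hi.trans k.lt_succ_self), h k k.lt_succ_self]

theorem run_eq_of_le {X Y : ℕ → Fin d} {k : ℕ} (hrun : P.run X k = P.run Y k)
    (h : ∀ i, k ≤ i → X i = Y i) {N : ℕ} (hN : k ≤ N) : P.run X N = P.run Y N := by
  induction N, hN using Nat.le_induction with
  | base => exact hrun
  | succ N hkN ih => simp only [run, ih, h N hkN]

def gain (k : ℕ) (x : Fin d) (μ : P.Msg k) : ℤ := x - d * P.out k x μ

def value (X : ℕ → Fin d) (k : ℕ) : ℤ :=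
  ∑ i ∈ Finset.range k, P.gain i (X i) (P.run X i)

theorem value_succ (X : ℕ → Fin d) (k : ℕ) :
    P.value X (k + 1) = P.value X k + P.gain k (X k) (P.run X k) :=
  Finset.sum_range_succ _ _

theorem value_congr {X Y : ℕ → Fin d} {k : ℕ} (h : ∀ i < k, X i = Y i) :
    P.value X k = P.value Y k :=
  Finset.sum_congr rfl fun i hi => by
    have hik := Finset.mem_range.1 hi
    rw [h i hik, P.run_congr fun j hj => h j (hj.trans hik)]

theorem value_sub_eq_of_le {X Y : ℕ → Fin d} {k : ℕ} (hrun : P.run X k = P.run Y k)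
    (h : ∀ i, k ≤ i → X i = Y i) {N : ℕ} (hN : k ≤ N) :
    P.value X N - P.value X k = P.value Y N - P.value Y k := by
  induction N, hN using Nat.le_induction with
  | base => simp
  | succ N hkN ih =>
    rw [value_succ, value_succ, h N hkN, P.run_eq_of_le hrun h hkN]
    linarith

theorem intCast_value (X : ℕ → Fin d) (k : ℕ) :
    (P.value X k : ZMod d) = ∑ i ∈ Finset.range k, ((X i : ℕ) : ZMod d) := by
  simp [value, gain]

theorem castHom_intCast_gain (k : ℕ) (x : Fin d) (μ : P.Msg k) :
    ZMod.castHom (dvd_mul_left d m) (ZMod d) (P.gain k x μ) = (x : ℕ) := by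
  simp [gain]

theorem exists_intCast_value_eq_zero [NeZero d] {k : ℕ} (hk : k < n) (X : ℕ → Fin d) :
    ∃ Z : ℕ → Fin d, (∀ i < k, Z i = X i) ∧ (P.value Z n : ZMod d) = 0 := by
  set c : Fin d := ⟨(-(P.value X k : ZMod d)).val, ZMod.val_lt _⟩
  refine ⟨fun i => if i < k then X i else if i = k then c else 0, fun i hi => if_pos hi, ?_⟩
  have hhead : ∀ i ∈ Finset.range k,
      (((if i < k then X i else if i = k then c else 0 : Fin d) : ℕ) : ZMod d) = (X i : ℕ) :=
    fun i hi => by rw [if_pos (Finset.mem_range.1 hi)]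
  have htail : ∀ i ∈ Finset.Ico k n,
      (((if i < k then X i else if i = k then c else 0 : Fin d) : ℕ) : ZMod d) =
        if i = k then ((c : ℕ) : ZMod d) else 0 := fun i hi => by
    rw [if_neg (Finset.mem_Ico.1 hi).1.not_gt]
    split_ifs <;> simp
  rw [intCast_value, ← Finset.sum_range_add_sum_Ico _ hk.le, Finset.sum_congr rfl hhead,
    Finset.sum_congr rfl htail, Finset.sum_ite_eq', if_pos (Finset.mem_Ico.2 ⟨le_rfl, hk⟩),
    ← P.intCast_value]
  simp [c]

variable {P}

theorem Solves.intCast_value_eq_zero (hP : P.Solves) (X : ℕ → Fin d)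
    (h : (P.value X n : ZMod d) = 0) : (P.value X n : ZMod (m * d)) = 0 := by
  have hX : (d : ℤ) ∣ ∑ k ∈ Finset.range n, ((X k : ℕ) : ℤ) := by
    rw [← ZMod.intCast_zmod_eq_zero_iff_dvd, ← h, intCast_value]
    push_cast
    rfl
  rw [ZMod.intCast_zmod_eq_zero_iff_dvd]
  convert (hP X hX).dvd using 1
  · push_cast; rfl
  · simp [value, gain, Finset.sum_sub_distrib, Finset.mul_sum]

theorem Solves.intCast_value_eq [NeZero d] (hP : P.Solves) {k : ℕ}
    (hk : k < n) {X Y : ℕ → Fin d} (hrun : P.run X k = P.run Y k)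
    (h : (P.value X k : ZMod d) = P.value Y k) :
    (P.value X k : ZMod (m * d)) = P.value Y k := by
  obtain ⟨Z, hZX, hZ⟩ := P.exists_intCast_value_eq_zero hk X
  set W : ℕ → Fin d := fun i => if i < k then Y i else Z i
  have hWY : ∀ i < k, W i = Y i := fun i hi => if_pos hi
  have hWZ : ∀ i, k ≤ i → W i = Z i := fun i hi => if_neg hi.not_gt
  have hWrun : P.run W k = P.run Z k := by
    rw [P.run_congr hWY, P.run_congr hZX, hrun]
  have htail := P.value_sub_eq_of_le hWrun hWZ hk.le
  rw [P.value_congr hWY, P.value_congr hZX] at htail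
  have hW : P.value W n = P.value Z n - P.value X k + P.value Y k := by linarith
  have hWd : (P.value W n : ZMod d) = 0 := by
    rw [hW]; push_cast; rw [hZ, h]; ring
  have hWmd := hP.intCast_value_eq_zero W hWd
  rw [hW] at hWmd
  push_cast at hWmd
  rw [hP.intCast_value_eq_zero Z hZ] at hWmd
  linear_combination -hWmd

section Reachable

variable (P) [NeZero m] [NeZero d]

open scoped Classical in
noncomputable def reachable (k : ℕ) (μ : P.Msg k) : Finset (ZMod (m * d)) :=
  {v | ∃ X, P.run X k = μ ∧ (P.value X k : ZMod (m * d)) = v}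

variable {P}

theorem mem_reachable {k : ℕ} {μ : P.Msg k} {v : ZMod (m * d)} :
    v ∈ P.reachable k μ ↔ ∃ X, P.run X k = μ ∧ (P.value X k : ZMod (m * d)) = v := by
  simp [reachable]

theorem intCast_value_mem_reachable (X : ℕ → Fin d) (k : ℕ) :
    (P.value X k : ZMod (m * d)) ∈ P.reachable k (P.run X k) :=
  mem_reachable.2 ⟨X, rfl, rfl⟩

theorem add_gain_mem_reachable {k : ℕ} {μ : P.Msg k} {v : ZMod (m * d)}
    (hv : v ∈ P.reachable k μ) (x : Fin d) :
    v + P.gain k x μ ∈ P.reachable (k + 1) (P.send k x μ) := by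
  obtain ⟨X, hrun, rfl⟩ := mem_reachable.1 hv
  set X' : ℕ → Fin d := fun i => if i < k then X i else x
  have hX' : ∀ i < k, X' i = X i := fun i hi => if_pos hi
  have hX'k : X' k = x := if_neg k.lt_irrefl
  refine mem_reachable.2 ⟨X', ?_, ?_⟩
  · rw [run, hX'k, P.run_congr hX', hrun]
  · rw [value_succ, hX'k, P.run_congr hX', hrun, P.value_congr hX']
    push_cast
    rfl

theorem image_add_gain_subset (k : ℕ) (μ : P.Msg k) (x : Fin d) :
    (P.reachable k μ).image (· + (P.gain k x μ : ZMod (m * d))) ⊆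
      P.reachable (k + 1) (P.send k x μ) := by
  simp only [Finset.subset_iff, Finset.mem_image]
  rintro _ ⟨v, hv, rfl⟩
  exact add_gain_mem_reachable hv x

theorem card_reachable_le_card_reachable_send (k : ℕ) (μ : P.Msg k) (x : Fin d) :
    #(P.reachable k μ) ≤ #(P.reachable (k + 1) (P.send k x μ)) := by
  rw [← Finset.card_image_of_injective _ (add_left_injective (P.gain k x μ : ZMod (m * d)))]
  exact Finset.card_le_card (image_add_gain_subset k μ x)

theorem Solves.injOn_castHom_reachable (hP : P.Solves) {k : ℕ} (hk : k < n) (μ : P.Msg k) :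
    Set.InjOn (ZMod.castHom (dvd_mul_left d m) (ZMod d)) (P.reachable k μ) := by
  intro u hu v hv huv
  obtain ⟨X, hX, rfl⟩ := mem_reachable.1 hu
  obtain ⟨Y, hY, rfl⟩ := mem_reachable.1 hv
  simp only [map_intCast] at huv
  exact hP.intCast_value_eq hk (hX.trans hY.symm) huv

theorem Solves.card_reachable_le (hP : P.Solves) {k : ℕ} (hk : k < n) (μ : P.Msg k) :
    #(P.reachable k μ) ≤ d := by
  simpa using Finset.card_le_card_of_injOn _ (fun _ _ => Finset.mem_univ _)
    (hP.injOn_castHom_reachable hk μ)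

theorem Solves.exists_card_reachable_lt (hP : P.Solves) {s : ℕ} (hm : Even m) (hd : d = 2 ^ s)
    {k : ℕ} (hk : k + 1 < n) {μ : P.Msg k} (hμ : (P.reachable k μ).Nonempty)
    (hsmall : Fintype.card (P.Msg (k + 1)) < d) :
    ∃ x, #(P.reachable k μ) < #(P.reachable (k + 1) (P.send k x μ)) := by
  obtain ⟨x₁, x₂, hne, hsend⟩ := Fintype.exists_ne_map_eq_of_card_lt
    (fun x : Fin d => P.send k x μ) (by simpa using hsmall)
  by_contra! hle
  set A := P.reachable k μ
  set c : Fin d → ZMod (m * d) := fun x => P.gain k x μ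
  have himage : ∀ x, P.send k x μ = P.send k x₁ μ →
      A.image (· + c x) = P.reachable (k + 1) (P.send k x₁ μ) := fun x hx =>
    Finset.eq_of_subset_of_card_le (hx ▸ image_add_gain_subset k μ x) <| by
      rw [Finset.card_image_of_injective _ (add_left_injective _)]
      exact hle x₁
  -- both translates of `A` fill the same reachable set, so `A` is stable under their difference
  have hstable : ∀ u ∈ A, u + (c x₁ - c x₂) ∈ A := by
    intro u hu
    have : u + c x₁ ∈ A.image (· + c x₂) := by
      rw [himage x₂ hsend.symm, ← himage x₁ rfl]
      exact Finset.mem_image_of_mem _ hu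
    obtain ⟨w, hw, hwu⟩ := Finset.mem_image.1 this
    rwa [show u + (c x₁ - c x₂) = w by linear_combination -hwu]
  have h := ZMod.castHom_eq_zero_of_add_mem hm hd hμ
    (hP.injOn_castHom_reachable (k.lt_succ_self.trans hk) μ) hstable
  rw [map_sub, castHom_intCast_gain, castHom_intCast_gain, sub_eq_zero,
    ZMod.natCast_eq_natCast_iff', Nat.mod_eq_of_lt x₁.isLt, Nat.mod_eq_of_lt x₂.isLt] at h
  exact hne (Fin.ext h)

variable (P)

noncomputable def maxCardReachable (k : ℕ) : ℕ :=
  Finset.univ.sup fun μ : P.Msg k => #(P.reachable k μ)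

def smallStages (N : ℕ) : Finset ℕ :=
  {j ∈ Finset.Icc 1 N | Fintype.card (P.Msg j) < d}

variable {P}

theorem card_reachable_le_maxCardReachable {k : ℕ} (μ : P.Msg k) :
    #(P.reachable k μ) ≤ P.maxCardReachable k :=
  Finset.le_sup (f := fun μ => #(P.reachable k μ)) (Finset.mem_univ μ)

theorem exists_card_reachable_eq_maxCardReachable (k : ℕ) :
    ∃ μ : P.Msg k, #(P.reachable k μ) = P.maxCardReachable k := by
  obtain ⟨μ, -, hμ⟩ := Finset.exists_mem_eq_sup Finset.univ
    ⟨P.run (fun _ => 0) k, Finset.mem_univ _⟩ fun μ => #(P.reachable k μ)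
  exact ⟨μ, hμ.symm⟩

theorem maxCardReachable_pos (k : ℕ) : 0 < P.maxCardReachable k :=
  (Finset.card_pos.2 ⟨_, intCast_value_mem_reachable (fun _ => 0) k⟩).trans_le
    (card_reachable_le_maxCardReachable _)

theorem Solves.maxCardReachable_le (hP : P.Solves) {k : ℕ} (hk : k < n) :
    P.maxCardReachable k ≤ d :=
  Finset.sup_le fun μ _ => hP.card_reachable_le hk μ

theorem maxCardReachable_le_succ (k : ℕ) :
    P.maxCardReachable k ≤ P.maxCardReachable (k + 1) := by
  obtain ⟨μ, hμ⟩ := exists_card_reachable_eq_maxCardReachable (P := P) k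
  rw [← hμ]
  exact (card_reachable_le_card_reachable_send k μ 0).trans (card_reachable_le_maxCardReachable _)

theorem Solves.maxCardReachable_lt_succ (hP : P.Solves) {s : ℕ} (hm : Even m) (hd : d = 2 ^ s)
    {k : ℕ} (hk : k + 1 < n) (hsmall : Fintype.card (P.Msg (k + 1)) < d) :
    P.maxCardReachable k < P.maxCardReachable (k + 1) := by
  obtain ⟨μ, hμ⟩ := exists_card_reachable_eq_maxCardReachable (P := P) k
  have hne : (P.reachable k μ).Nonempty := Finset.card_pos.1 (hμ ▸ maxCardReachable_pos k)
  obtain ⟨x, hx⟩ := hP.exists_card_reachable_lt hm hd hk hne hsmall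
  rw [← hμ]
  exact hx.trans_le (card_reachable_le_maxCardReachable _)

theorem Solves.card_smallStages_add_le (hP : P.Solves) {s : ℕ} (hm : Even m) (hd : d = 2 ^ s)
    {k : ℕ} (hk : k < n) :
    #(P.smallStages k) + P.maxCardReachable 0 ≤ P.maxCardReachable k := by
  induction k with
  | zero => simp [smallStages]
  | succ k ih =>
    have hstages : P.smallStages (k + 1) =
        if Fintype.card (P.Msg (k + 1)) < d then insert (k + 1) (P.smallStages k)
        else P.smallStages k := by
      rw [smallStages, ← Finset.insert_Icc_right_eq_Icc_add_one (by omega), Finset.filter_insert]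
      rfl
    have ih := ih (k.lt_succ_self.trans hk)
    split_ifs at hstages with hsmall
    · rw [hstages, Finset.card_insert_of_notMem (by simp [smallStages])]
      have := hP.maxCardReachable_lt_succ hm hd hk hsmall
      omega
    · rw [hstages]
      exact ih.trans (maxCardReachable_le_succ k)

theorem Solves.card_smallStages_lt (hP : P.Solves) {s : ℕ} (hm : Even m) (hd : d = 2 ^ s)
    (hn : 0 < n) : #(P.smallStages (n - 1)) < d :=
  calc #(P.smallStages (n - 1)) < #(P.smallStages (n - 1)) + P.maxCardReachable 0 :=
        Nat.lt_add_of_pos_right (maxCardReachable_pos 0)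
    _ ≤ P.maxCardReachable (n - 1) := hP.card_smallStages_add_le hm hd (Nat.sub_lt hn one_pos)
    _ ≤ d := hP.maxCardReachable_le (Nat.sub_lt hn one_pos)

end Reachable

end SeqProtocol

theorem consecutive_communication_run_general
    {n m d s : ℕ} (hm : 0 < m) (hmeven : Even m) (hd : d = 2 ^ s)
    (hn : m * d < n) (P : SeqProtocol n m d) (hP : P.Solves) :
    ∃ a L : ℕ, 1 ≤ a ∧ a + L ≤ n ∧
      ((n : ℝ) - (m : ℝ) * d) / ((m : ℝ) * d) ≤ (L : ℝ) ∧
      ∀ k, a ≤ k → k < a + L → d ≤ m * (@Fintype.card (P.Msg k) (P.msgFintype k)) := by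
  have : NeZero m := ⟨hm.ne'⟩
  have : NeZero d := ⟨hd ▸ pow_ne_zero s two_ne_zero⟩
  have hmd : 0 < m * d := Nat.pos_of_neZero _
  set w := n / (m * d)
  obtain ⟨j, hj, hdisj⟩ := Finset.exists_disjoint_Ico_of_card_lt
    (hP.card_smallStages_lt hmeven hd (by omega)) 1 w
  have hwin : 1 + j * w + w ≤ n := by
    have hw : 0 < d * w := Nat.mul_pos (Nat.pos_of_neZero d) (Nat.div_pos hn.le hmd)
    have hjw : j * w + w ≤ d * w := add_one_mul j w ▸ Nat.mul_le_mul_right w hj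
    have hm2 : 2 ≤ m := by obtain ⟨r, rfl⟩ := hmeven; omega
    have hdw : 2 * (d * w) ≤ n := calc
      2 * (d * w) ≤ m * (d * w) := Nat.mul_le_mul_right _ hm2
      _ = w * (m * d) := by ring
      _ ≤ n := Nat.div_mul_le_self n (m * d)
    omega
  refine ⟨1 + j * w, w, Nat.le_add_right 1 _, hwin, ?_, fun k hk₁ hk₂ => ?_⟩
  · have hw : (w : ℝ) = ⌊(n : ℝ) / (m * d : ℕ)⌋₊ := by rw [Nat.floor_div_eq_div]
    rw [sub_div, div_self (by exact_mod_cast hmd.ne'), hw]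
    exact_mod_cast (Nat.sub_one_lt_floor _).le
  · have hk : k ∉ P.smallStages (n - 1) :=
      Finset.disjoint_left.1 hdisj (Finset.mem_Ico.2 ⟨hk₁, hk₂⟩)
    simp only [SeqProtocol.smallStages, Finset.mem_filter, Finset.mem_Icc, not_and, not_lt] at hk
    exact (hk ⟨by omega, by omega⟩).trans (Nat.le_mul_of_pos_left _ hm)

/-- Any deterministic sequential protocol solving the sequential `n`-point modulo-`(m,d)`
problem (with `m` even and positive, `d = 2^s`, `s ≥ 1`, and `n > m·d`) contains a run of
at least `(n - m·d)/(m·d)` consecutive stages, each of whose message alphabets satisfies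
`m * |M_k| ≥ d`, i.e. each of which sends at least `log₂(d/m)` bits of communication. -/
theorem consecutive_communication_run
    {n m d s : ℕ} (hm : 0 < m) (hmeven : Even m) (hs : 1 ≤ s) (hd : d = 2 ^ s)
    (hn : m * d < n) (P : SeqProtocol n m d) (hP : P.Solves) :
    ∃ a L : ℕ, 1 ≤ a ∧ a + L ≤ n ∧
      ((n : ℝ) - (m : ℝ) * d) / ((m : ℝ) * d) ≤ (L : ℝ) ∧
      ∀ k, a ≤ k → k < a + L → d ≤ m * (@Fintype.card (P.Msg k) (P.msgFintype k)) :=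
  consecutive_communication_run_general hm hmeven hd hn P hP
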